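/- arXiv:2503.09230 — 4 statements merged into one kernel-verified Lean document; each statement's English description precedes it below -/
import Mathlib

section
/- Let (G,R) be a rooted graph, and let T and T' be two edge-disjoint trees in G, each with at least 3 vertices, such that every vertex of S := V(T) ∩ V(T') is simultaneously a leaf of T, a leaf of T', and a member of R. Then (G,R) has a rooted K_{2,|S|}-model. -/
open SimpleGraph

private lemma aux_two_neighbors {W : Type*} {H : SimpleGraph W} {a b v : W}
    (p : H.Walk a b) (hp : p.IsPath) (hv : v ∈ p.support)
    (hva : v ≠ a) (hvb : v ≠ b) :
    ∃ x y, x ≠ y ∧ H.Adj v x ∧ H.Adj v y := by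
  classical
  have hspec := p.take_spec hv
  set q := p.takeUntil v hv with hqdef
  set r := p.dropUntil v hv with hrdef
  have hnodup : (q.support ++ r.support.tail).Nodup := by
    have h1 := hp.support_nodup
    rw [← hspec, Walk.support_append] at h1
    exact h1
  have hdisj := List.disjoint_of_nodup_append hnodup
  have hqn : ¬ q.reverse.Nil := Walk.not_nil_of_ne hva
  have hrn : ¬ r.Nil := Walk.not_nil_of_ne hvb
  obtain ⟨x, hx, q2, hq2⟩ := Walk.not_nil_iff.mp hqn
  obtain ⟨y, hy, r2, hr2⟩ := Walk.not_nil_iff.mp hrn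
  refine ⟨x, y, ?_, hx, hy⟩
  have hxq : x ∈ q.support := by
    rw [← List.mem_reverse, ← Walk.support_reverse, hq2]
    simp
  have hyr : y ∈ r.support.tail := by
    rw [hr2]; simp
  intro h
  exact hdisj hxq (h ▸ hyr)

private lemma aux_not_interior {W : Type} {H : SimpleGraph W} {v : W}
    (hcard : (H.neighborSet v).ncard = 1) {a b : W} (p : H.Walk a b) (hp : p.IsPath)
    (hv : v ∈ p.support) : v = a ∨ v = b := by
  by_contra h
  push_neg at h
  obtain ⟨x, y, hxy, hx, hy⟩ := aux_two_neighbors p hp hv h.1 h.2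
  obtain ⟨c, hc⟩ := Set.ncard_eq_one.mp hcard
  have hxc : x ∈ H.neighborSet v := hx
  have hyc : y ∈ H.neighborSet v := hy
  rw [hc, Set.mem_singleton_iff] at hxc hyc
  exact hxy (hxc.trans hyc.symm)

private lemma aux_reach {V : Type} {G : SimpleGraph V} (T : G.Subgraph) (s : Set V) :
    ∀ {a b : T.verts} (p : T.coe.Walk a b), (∀ v ∈ p.support, (v : V) ∈ s) →
      ∀ (ha : (a : V) ∈ s) (hb : (b : V) ∈ s),
      (G.induce s).Reachable ⟨a, ha⟩ ⟨b, hb⟩ := by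
  intro a b p
  induction p with
  | nil => intro _ ha hb; exact Reachable.refl _
  | @cons u c w hadj q ih =>
      intro h ha hb
      have hc : (c : V) ∈ s := h c (by simp)
      have h1 : (G.induce s).Adj ⟨(u : V), ha⟩ ⟨(c : V), hc⟩ := by
        simp only [comap_adj, Function.Embedding.coe_subtype]
        exact T.adj_sub hadj
      exact h1.reachable.trans (ih (fun v hv => h v (by simp [hv])) hc hb)

private lemma aux_coe_ncard {V : Type} [Fintype V] {G : SimpleGraph V} (T : G.Subgraph)
    (v : T.verts) : (T.coe.neighborSet v).ncard = (T.neighborSet (v : V)).ncard := by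
  rw [← Nat.card_coe_set_eq, ← Nat.card_coe_set_eq]
  exact Nat.card_congr (Subgraph.coeNeighborSetEquiv v)

private lemma aux_leaf_leaf {V : Type} [Fintype V] {G : SimpleGraph V} {T : G.Subgraph}
    (hT : T.coe.IsTree) (hT3 : 3 ≤ T.verts.ncard) {s u : V} (hs : s ∈ T.verts)
    (hcs : (T.neighborSet s).ncard = 1) (hcu : (T.neighborSet u).ncard = 1)
    (hadj : T.Adj s u) : False := by
  have hu : u ∈ T.verts := hadj.snd_mem
  have hsu : s ≠ u := (T.adj_sub hadj).ne
  classical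
  have hsub : T.verts ⊆ {s, u} := by
    intro w hw
    by_contra hwmem
    simp only [Set.mem_insert_iff, Set.mem_singleton_iff, not_or] at hwmem
    obtain ⟨hws, hwu⟩ := hwmem
    obtain ⟨p0⟩ := hT.isConnected.preconnected ⟨s, hs⟩ ⟨w, hw⟩
    set p := p0.toPath.1 with hpdef
    have hp : p.IsPath := p0.toPath.2
    have hsw : ((⟨s, hs⟩ : T.verts) : T.verts) ≠ ⟨w, hw⟩ := by
      intro h; exact hws (congrArg Subtype.val h).symm
    have hpn : ¬ p.Nil := Walk.not_nil_of_ne hsw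
    obtain ⟨x, hx, q, hq⟩ := Walk.not_nil_iff.mp hpn
    -- x's coercion is the unique neighbor u
    obtain ⟨c, hc⟩ := Set.ncard_eq_one.mp hcs
    have hu1 : u ∈ T.neighborSet s := hadj
    have hx1 : (x : V) ∈ T.neighborSet s := hx
    rw [hc, Set.mem_singleton_iff] at hu1 hx1
    have hxu : (x : V) = u := hx1.trans hu1.symm
    have hxsupp : x ∈ p.support := by rw [hq]; simp
    have hxcard : (T.coe.neighborSet x).ncard = 1 := by
      rw [aux_coe_ncard, hxu]; exact hcu
    rcases aux_not_interior hxcard p hp hxsupp with h | h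
    · have : (x : V) = s := congrArg Subtype.val h
      exact hsu (this ▸ hxu)
    · have : (x : V) = w := congrArg Subtype.val h
      exact hwu (this ▸ hxu)
  have : T.verts.ncard ≤ 2 := by
    refine le_trans (Set.ncard_le_ncard hsub (Set.toFinite _)) ?_
    refine le_trans (Set.ncard_insert_le _ _) ?_
    simp
  omega
/-- The induced subgraph on a vertex subset is connected. -/
def SetConnected {V : Type} (G : SimpleGraph V) (s : Set V) : Prop :=
  (G.induce s).Connected

/-- Two vertex subsets are adjacent: some edge of `G` joins them. -/
def AdjSets {V : Type} (G : SimpleGraph V) (s t : Set V) : Prop :=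
  ∃ a ∈ s, ∃ b ∈ t, G.Adj a b

private lemma aux_side {V : Type} [Fintype V] {G : SimpleGraph V} {T : G.Subgraph}
    (hT : T.coe.IsTree) (hT3 : 3 ≤ T.verts.ncard) (B : Set V)
    (hleaf : ∀ v ∈ T.verts, v ∈ B → (T.neighborSet v).ncard = 1) :
    SetConnected G (T.verts \ B) ∧
      ∀ s ∈ T.verts, s ∈ B → ∃ u ∈ T.verts \ B, G.Adj u s := by
  classical
  have hnbr : ∀ s ∈ T.verts, s ∈ B → ∃ u ∈ T.verts \ B, T.Adj u s := by
    intro s hs hsB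
    have hcs := hleaf s hs hsB
    obtain ⟨c, hc⟩ := Set.ncard_eq_one.mp hcs
    have hadj : T.Adj s c := by
      have : c ∈ T.neighborSet s := by rw [hc]; rfl
      exact this
    have hcT : c ∈ T.verts := hadj.snd_mem
    have hcB : c ∉ B := by
      intro hcB
      exact aux_leaf_leaf hT hT3 hs hcs (hleaf c hcT hcB) hadj
    exact ⟨c, ⟨hcT, hcB⟩, hadj.symm⟩
  have hne : (T.verts \ B).Nonempty := by
    have hTne : T.verts.Nonempty := by
      rw [← Set.ncard_pos (Set.toFinite _)]; omega
    obtain ⟨s, hs⟩ := hTne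
    by_cases hsB : s ∈ B
    · obtain ⟨u, hu, _⟩ := hnbr s hs hsB
      exact ⟨u, hu⟩
    · exact ⟨s, hs, hsB⟩
  constructor
  · have hne' : Nonempty ↥(T.verts \ B) := ⟨⟨hne.choose, hne.choose_spec⟩⟩
    refine SimpleGraph.Connected.mk ?_
    rintro ⟨a, ha⟩ ⟨b, hb⟩
    obtain ⟨p0⟩ := hT.isConnected.preconnected ⟨a, ha.1⟩ ⟨b, hb.1⟩
    set p := p0.toPath.1 with hpdef
    have hp : p.IsPath := p0.toPath.2
    have hsupp : ∀ v ∈ p.support, (v : V) ∈ T.verts \ B := by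
      intro v hv
      refine ⟨v.2, ?_⟩
      intro hvB
      have hvcard : (T.coe.neighborSet v).ncard = 1 := by
        rw [aux_coe_ncard]; exact hleaf _ v.2 hvB
      rcases aux_not_interior hvcard p hp hv with h | h
      · have : (v : V) = a := congrArg Subtype.val h
        exact ha.2 (this ▸ hvB)
      · have : (v : V) = b := congrArg Subtype.val h
        exact hb.2 (this ▸ hvB)
    exact aux_reach T (T.verts \ B) p hsupp ha hb
  · intro s hs hsB
    obtain ⟨u, hu, hadj⟩ := hnbr s hs hsB
    exact ⟨u, hu, T.adj_sub hadj⟩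

/-- A `K_{2,ι}`-model in `G`: two "side" branch sets `X1, X2` and a family `Y`
of "central" branch sets indexed by `ι`, all pairwise disjoint and connected,
with each `Y j` adjacent to both `X1` and `X2`. -/
def IsK2Model {V : Type} (G : SimpleGraph V) (X1 X2 : Set V)
    {ι : Type} (Y : ι → Set V) : Prop :=
  Disjoint X1 X2 ∧ (∀ j, Disjoint X1 (Y j) ∧ Disjoint X2 (Y j)) ∧
  (Pairwise fun j k => Disjoint (Y j) (Y k)) ∧
  SetConnected G X1 ∧ SetConnected G X2 ∧ (∀ j, SetConnected G (Y j)) ∧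
  (∀ j, AdjSets G X1 (Y j) ∧ AdjSets G X2 (Y j))

private lemma aux_singleton_connected {V : Type} (G : SimpleGraph V) (s : V) :
    SetConnected G ({s} : Set V) := by
  refine @SimpleGraph.Connected.mk _ _ ?_ ⟨⟨s, rfl⟩⟩
  intro u v
  have : u = v := Subtype.ext (u.2.trans v.2.symm)
  rw [this]

/-- if `T` and `T'` are edge-disjoint trees in `G`, each with at
least 3 vertices, such that every vertex of `S := V(T) ∩ V(T')` is a leaf of
`T`, a leaf of `T'` and a root, then `(G,R)` has a rooted `K_{2,|S|}`-model
(with central branch sets indexed by `S`). -/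
theorem edge_disjoint_trees_touching_give_rooted_model {V : Type} [Fintype V]
    (G : SimpleGraph V) (R : Set V) (T T' : G.Subgraph)
    (hT : T.coe.IsTree) (hT' : T'.coe.IsTree)
    (hT3 : 3 ≤ T.verts.ncard) (hT'3 : 3 ≤ T'.verts.ncard)
    (hedge : Disjoint T.edgeSet T'.edgeSet)
    (hS : ∀ v ∈ T.verts ∩ T'.verts,
      (T.neighborSet v).ncard = 1 ∧ (T'.neighborSet v).ncard = 1 ∧ v ∈ R) :
    ∃ (X1 X2 : Set V) (Y : ↥(T.verts ∩ T'.verts) → Set V),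
      IsK2Model G X1 X2 Y ∧ ∀ j, (Y j ∩ R).Nonempty := by
  obtain ⟨hconn1, hadj1⟩ := aux_side hT hT3 T'.verts
    (fun v hv hv' => (hS v ⟨hv, hv'⟩).1)
  obtain ⟨hconn2, hadj2⟩ := aux_side hT' hT'3 T.verts
    (fun v hv hv' => (hS v ⟨hv', hv⟩).2.1)
  refine ⟨T.verts \ T'.verts, T'.verts \ T.verts, fun j => {(j : V)}, ?_, ?_⟩
  · refine ⟨?_, ?_, ?_, hconn1, hconn2, fun j => aux_singleton_connected G _, ?_⟩
    · rw [Set.disjoint_left]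
      rintro x ⟨hx, _⟩ ⟨_, hx'⟩
      exact hx' hx
    · intro j
      constructor
      · rw [Set.disjoint_singleton_right]
        exact fun h => h.2 j.2.2
      · rw [Set.disjoint_singleton_right]
        exact fun h => h.2 j.2.1
    · intro j k hjk
      rw [Set.disjoint_singleton_left, Set.mem_singleton_iff]
      exact fun h => hjk (Subtype.ext h)
    · intro j
      constructor
      · obtain ⟨u, hu, hadj⟩ := hadj1 (j : V) j.2.1 j.2.2
        exact ⟨u, hu, (j : V), rfl, hadj⟩
      · obtain ⟨u, hu, hadj⟩ := hadj2 (j : V) j.2.2 j.2.1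
        exact ⟨u, hu, (j : V), rfl, hadj⟩
  · exact fun j => ⟨(j : V), rfl, (hS (j : V) j.2).2.2⟩
end

section
/- For points in the standard 2-dimensional simplex Δ = {x ∈ ℝ³ : x ≥ 0, x_1 + x_2 + x_3 = 1}, define for each i ∈ {1,2,3} (indices mod 3) the relation u ≤_i v iff u = v, or (u_{i-1} < v_{i-1} and u_{i+1} < v_{i+1}). If S ⊆ Δ is a finite set of at least 4 points that is an antichain in each of the three partial orders ≤_1, ≤_2, ≤_3, then there exists an index i ∈ {1,2,3} and a constant c such that u_i = c for all u ∈ S. -/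
/-- Membership in the standard 2-dimensional simplex in `ℝ³`. -/
def InSimplex (x : Fin 3 → ℝ) : Prop :=
  (∀ j, 0 ≤ x j) ∧ x 0 + x 1 + x 2 = 1

/-- The relation `u ≤_i v`: `u = v`, or both coordinates other than `i` of `u`
are strictly smaller than those of `v` (indices cyclic in `Fin 3`). -/
def LeI (i : Fin 3) (u v : Fin 3 → ℝ) : Prop :=
  u = v ∨ (u (i - 1) < v (i - 1) ∧ u (i + 1) < v (i + 1))

/-!
Two points of the simplex are incomparable in all three orders exactly when their difference
has a zero coordinate and two coordinates of opposite signs, i.e. when they agree in exactly one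
coordinate. Colour each pair of distinct points of `S` by that coordinate. In a triangle two
equal colours force the third, so every triangle is monochromatic or rainbow; on four points
this leaves a monochromatic `K₄` or the colouring by its three perfect matchings. The latter is
impossible: the coordinate sums are equal, and agreeing in coordinate `a` means lying on a line
parallel to `e_b - e_c`, so the four points would form a parallelogram with parallel diagonals.
Hence if `u, v ∈ S` agree in coordinate `i`, every other point does too.
-/

open Finset

theorem Fin.univ_three_eq {a b c : Fin 3} (hab : a ≠ b) (hac : a ≠ c) (hbc : b ≠ c) :
    (univ : Finset (Fin 3)) = {a, b, c} :=
  (eq_univ_of_card _ (by rw [card_insert_of_notMem (by simp [hab, hac]), card_pair hbc]; rfl)).symm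

theorem Fin.sum_univ_three_of_ne {M : Type*} [AddCommMonoid M] (f : Fin 3 → M) {a b c : Fin 3}
    (hab : a ≠ b) (hac : a ≠ c) (hbc : b ≠ c) : ∑ j, f j = f a + f b + f c := by
  rw [univ_three_eq hab hac hbc, sum_insert (by simp [hab, hac]), sum_pair hbc, add_assoc]

def AgreesOnlyAt {ι α : Type*} (i : ι) (u v : ι → α) : Prop :=
  ∀ j, u j = v j ↔ j = i

def MonoOrRainbow {α : Type*} (a b c : α) : Prop :=
  a = b ∧ b = c ∨ a ≠ b ∧ b ≠ c ∧ a ≠ c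

instance {α : Type*} [DecidableEq α] (a b c : α) : Decidable (MonoOrRainbow a b c) :=
  inferInstanceAs (Decidable (_ ∨ _))

-- The colours of the edges of `K₄` on `x, y, z, w` are `xy = a`, `xz = b`, `xw = c`, `yz = d`,
-- `yw = e`, `zw = f`.
theorem Fin.monoOrRainbow_K4 : ∀ a b c d e f : Fin 3,
    MonoOrRainbow a d b → MonoOrRainbow a e c → MonoOrRainbow b f c → MonoOrRainbow d f e →
      b = a ∨ (f = a ∧ e = b ∧ d = c ∧ a ≠ b ∧ a ≠ c ∧ b ≠ c) := by
  decide

namespace AgreesOnlyAt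

variable {ι α : Type*} {i j k : ι} {u v w : ι → α}

theorem apply (h : AgreesOnlyAt i u v) : u i = v i :=
  (h i).2 rfl

theorem eq_of_apply_eq (h : AgreesOnlyAt i u v) (hj : u j = v j) : j = i :=
  (h j).1 hj

theorem monoOrRainbow (huv : AgreesOnlyAt i u v) (hvw : AgreesOnlyAt j v w)
    (huw : AgreesOnlyAt k u w) : MonoOrRainbow i j k := by
  by_cases hij : i = j
  · subst hij
    exact Or.inl ⟨rfl, huw.eq_of_apply_eq (huv.apply.trans hvw.apply)⟩
  refine Or.inr ⟨hij, fun hjk => hij ?_, fun hik => hij ?_⟩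
  · subst hjk
    exact huv.eq_of_apply_eq (huw.apply.trans hvw.apply.symm) |>.symm
  · subst hik
    exact hvw.eq_of_apply_eq (huv.apply.symm.trans huw.apply)

end AgreesOnlyAt

theorem agreesOnlyAt_of_apply_eq {M : Type*} [AddCancelCommMonoid M] {u v : Fin 3 → M}
    (huv : u ≠ v) (hsum : ∑ j, u j = ∑ j, v j) {i : Fin 3} (hi : u i = v i) :
    AgreesOnlyAt i u v := by
  refine fun j => ⟨fun hj => ?_, fun hji => hji ▸ hi⟩
  by_contra hji
  obtain ⟨k, hki, hkj⟩ := (by decide : ∀ a b : Fin 3, ∃ c, c ≠ a ∧ c ≠ b) i j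
  rw [Fin.sum_univ_three_of_ne u hji hkj.symm hki.symm,
    Fin.sum_univ_three_of_ne v hji hkj.symm hki.symm, hi, hj] at hsum
  have hk : u k = v k := add_left_cancel hsum
  refine huv (funext fun l => ?_)
  have hl : l ∈ ({j, i, k} : Finset (Fin 3)) :=
    Fin.univ_three_eq hji hkj.symm hki.symm ▸ mem_univ l
  simp only [mem_insert, mem_singleton] at hl
  rcases hl with rfl | rfl | rfl
  exacts [hj, hi, hk]

section Ordered

variable {K : Type*} [Field K] [LinearOrder K] [IsStrictOrderedRing K]

theorem exists_apply_eq_of_incomparable {u v : Fin 3 → K} (hsum : ∑ j, u j = ∑ j, v j)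
    (huv : ∀ i : Fin 3, ¬(u (i - 1) < v (i - 1) ∧ u (i + 1) < v (i + 1)))
    (hvu : ∀ i : Fin 3, ¬(v (i - 1) < u (i - 1) ∧ v (i + 1) < u (i + 1))) :
    ∃ i, u i = v i := by
  by_contra! hne
  have h0 := huv 0; have h1 := huv 1; have h2 := huv 2
  have h0' := hvu 0; have h1' := hvu 1; have h2' := hvu 2
  simp only [Fin.isValue, Fin.reduceSub, Fin.reduceAdd] at h0 h1 h2 h0' h1' h2'
  rw [Fin.sum_univ_three, Fin.sum_univ_three] at hsum
  rcases (hne 0).lt_or_gt with a | a <;> rcases (hne 1).lt_or_gt with b | b <;>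
    rcases (hne 2).lt_or_gt with c | c <;> first | linarith | tauto

theorem apply_eq_of_opposite_pairs_agree {x y z w : Fin 3 → K} {a b c : Fin 3}
    (hab : a ≠ b) (hac : a ≠ c) (hbc : b ≠ c)
    (hxy : ∑ j, x j = ∑ j, y j) (hzw : ∑ j, z j = ∑ j, w j)
    (ha : x a = y a) (ha' : z a = w a) (hb : x b = z b) (hb' : y b = w b)
    (hc : x c = w c) (hc' : y c = z c) : x c = y c := by
  simp only [Fin.sum_univ_three_of_ne _ hab hac hbc] at hxy hzw
  linarith

theorem AgreesOnlyAt.eq_of_pairwise_agree_four {x y z w : Fin 3 → K} {a b c d e f : Fin 3}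
    (hxy : AgreesOnlyAt a x y) (hxz : AgreesOnlyAt b x z) (hxw : AgreesOnlyAt c x w)
    (hyz : AgreesOnlyAt d y z) (hyw : AgreesOnlyAt e y w) (hzw : AgreesOnlyAt f z w)
    (hsxy : ∑ j, x j = ∑ j, y j) (hszw : ∑ j, z j = ∑ j, w j) : b = a := by
  rcases Fin.monoOrRainbow_K4 a b c d e f (hxy.monoOrRainbow hyz hxz)
      (hxy.monoOrRainbow hyw hxw) (hxz.monoOrRainbow hzw hxw) (hyz.monoOrRainbow hzw hyw)
    with hba | ⟨rfl, rfl, rfl, hab, hac, hbc⟩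
  · exact hba
  · exact absurd (hxy.eq_of_apply_eq (apply_eq_of_opposite_pairs_agree hab hac hbc hsxy hszw
      hxy.apply hzw.apply hxz.apply hyw.apply hxw.apply hyz.apply)) hac.symm

end Ordered

/-- a finite set of at least 4 points of the simplex that is an
antichain in each of the three orders `≤_1, ≤_2, ≤_3` has a constant `i`-th
coordinate for some `i`. -/
theorem triple_antichain_constant_coordinate (S : Finset (Fin 3 → ℝ))
    (hΔ : ∀ u ∈ S, InSimplex u) (hcard : 4 ≤ S.card)
    (hanti : ∀ i : Fin 3, ∀ u ∈ S, ∀ v ∈ S, LeI i u v → u = v) :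
    ∃ (i : Fin 3) (c : ℝ), ∀ u ∈ S, u i = c := by
  have hsum : ∀ u ∈ S, ∀ v ∈ S, ∑ j, u j = ∑ j, v j := fun u hu v hv => by
    rw [Fin.sum_univ_three, Fin.sum_univ_three, (hΔ u hu).2, (hΔ v hv).2]
  have hagree : ∀ u ∈ S, ∀ v ∈ S, u ≠ v → ∃ i, AgreesOnlyAt i u v :=
    fun u hu v hv huv =>
      have ⟨i, hi⟩ := exists_apply_eq_of_incomparable (hsum u hu v hv)
        (fun i h => huv (hanti i u hu v hv (Or.inr h)))
        (fun i h => huv (hanti i v hv u hu (Or.inr h)).symm)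
      ⟨i, agreesOnlyAt_of_apply_eq huv (hsum u hu v hv) hi⟩
  obtain ⟨u, hu, v, hv, huv⟩ := one_lt_card.1 (by omega : 1 < S.card)
  obtain ⟨i, hi⟩ := hagree u hu v hv huv
  refine ⟨i, u i, fun z hz => ?_⟩
  by_cases hzu : z = u
  · rw [hzu]
  by_cases hzv : z = v
  · rw [hzv, hi.apply]
  obtain ⟨w, hw, hwuvz⟩ := exists_mem_notMem_of_card_lt_card
    (card_le_three.trans_lt (by omega) : #{u, v, z} < #S)
  simp only [mem_insert, mem_singleton, not_or] at hwuvz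
  obtain ⟨hwu, hwv, hwz⟩ := hwuvz
  obtain ⟨b, hb⟩ := hagree u hu z hz (Ne.symm hzu)
  obtain ⟨c, hc⟩ := hagree u hu w hw (Ne.symm hwu)
  obtain ⟨d, hd⟩ := hagree v hv z hz (Ne.symm hzv)
  obtain ⟨e, he⟩ := hagree v hv w hw (Ne.symm hwv)
  obtain ⟨f, hf⟩ := hagree z hz w hw (Ne.symm hwz)
  have hbi : b = i := hi.eq_of_pairwise_agree_four hb hc hd he hf (hsum u hu v hv) (hsum z hz w hw)
  exact (hbi ▸ hb.apply).symm
end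

section
/- For every even integer n ≥ 6, the bagel graph B_n := K_2 ⊠ C_{n/2} (the strong product of an edge and a cycle of length n/2) contains no K_{2,5} minor. -/
/-- The bagel graph `B_n = K₂ ⊠ C_p` (`n = 2p`): vertices `Fin 2 × ZMod p`,
with `(a,i)` adjacent to `(b,j)` iff they are distinct and `i - j ∈ {0, ±1}`. -/
def Bagel (p : ℕ) : SimpleGraph (Fin 2 × ZMod p) :=
  SimpleGraph.fromRel (fun x y => x.2 = y.2 ∨ x.2 = y.2 + 1 ∨ y.2 = x.2 + 1)

/-!
Every column of `B_n` holds two vertices, and a connected vertex set projects onto an arc of the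
cycle of columns. Given disjoint connected branch sets `X₁` and `X₂`, we exhibit at most four
vertices outside `X₁ ∪ X₂` that every connected set avoiding `X₁ ∪ X₂` and adjacent to both must
meet; five disjoint such sets are then impossible by pigeonhole. The four vertices are the free
vertices of the columns at two cuts of the cycle, one on each side between `X₁` and `X₂`. If `X₁`
and `X₂` share a column, the columns each of them misses form an interval and the cuts sit at the
ends of these intervals; otherwise `X₁` lies inside the interval missed by `X₂` and the cuts sit
right beside `X₁`, a column that `X₁` or `X₂` half-occupies costing one free vertex and an empty
column two.
-/

open Finset

section

variable {V : Type} {G : SimpleGraph V}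

lemma SetConnected.nonempty {s : Set V} (hs : SetConnected G s) : s.Nonempty :=
  let ⟨⟨v, hv⟩⟩ := SimpleGraph.Connected.nonempty hs
  ⟨v, hv⟩

lemma SetConnected.iff_of_adj {s : Set V} (hs : SetConnected G s) {P : V → Prop}
    (hP : ∀ u ∈ s, ∀ v ∈ s, G.Adj u v → (P u ↔ P v)) {u w : V} (hu : u ∈ s) (hw : w ∈ s) :
    P u ↔ P w := by
  suffices ∀ a b : s, (G.induce s).Walk a b → (P a ↔ P b) from
    this ⟨u, hu⟩ ⟨w, hw⟩ (SimpleGraph.Connected.preconnected hs _ _).some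
  intro a b walk
  induction walk with
  | nil => rfl
  | cons h _ ih => exact (hP _ (Subtype.prop _) _ (Subtype.prop _) h).trans ih

def IsLink (G : SimpleGraph V) (X₁ X₂ Y : Set V) : Prop :=
  SetConnected G Y ∧ Disjoint X₁ Y ∧ Disjoint X₂ Y ∧ AdjSets G X₁ Y ∧ AdjSets G X₂ Y

lemma IsLink.symm {X₁ X₂ Y : Set V} (h : IsLink G X₁ X₂ Y) : IsLink G X₂ X₁ Y :=
  let ⟨hY, h₁, h₂, a₁, a₂⟩ := h
  ⟨hY, h₂, h₁, a₂, a₁⟩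

lemma IsK2Model.isLink {X₁ X₂ : Set V} {ι : Type} {Y : ι → Set V} (h : IsK2Model G X₁ X₂ Y)
    (j : ι) : IsLink G X₁ X₂ (Y j) :=
  let ⟨_, hXY, _, _, _, hY, hadj⟩ := h
  ⟨hY j, (hXY j).1, (hXY j).2, (hadj j).1, (hadj j).2⟩

def Separates (G : SimpleGraph V) (S : Finset V) (X₁ X₂ : Set V) : Prop :=
  ∀ Y, IsLink G X₁ X₂ Y → ∃ v ∈ Y, v ∈ S

lemma Separates.symm {S : Finset V} {X₁ X₂ : Set V} (h : Separates G S X₁ X₂) :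
    Separates G S X₂ X₁ :=
  fun Y hY => h Y hY.symm

lemma IsK2Model.card_le_card_of_separates {X₁ X₂ : Set V} {ι : Type} [Fintype ι]
    {Y : ι → Set V} {S : Finset V} (h : IsK2Model G X₁ X₂ Y) (hS : Separates G S X₁ X₂) :
    Fintype.card ι ≤ #S := by
  choose f hfY hfS using fun j => hS _ (h.isLink j)
  have hf : Function.Injective f := fun j k hjk => by
    by_contra hne
    exact Set.disjoint_left.mp (h.2.2.1 hne) (hfY j) (hjk ▸ hfY k)
  rw [← card_univ]
  exact card_le_card_of_injOn f (fun j _ => hfS j) hf.injOn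

end

namespace Bagel

variable {p : ℕ}

-- Reading the cycle of columns from `e` on: adjacent columns have levels differing by one,
-- except across the cut at `e` (`level_of_adj`).
def level (e z : ZMod p) : ℕ := (z - e).val

lemma level_self (e : ZMod p) : level e e = 0 := by simp [level]

def Misses (X : Set (Fin 2 × ZMod p)) (e : ZMod p) (t : ℕ) : Prop := ∀ v ∈ X, level e v.2 ≠ t

lemma not_misses_of_mem {X : Set (Fin 2 × ZMod p)} {e : ZMod p} {x : Fin 2 × ZMod p}
    (hx : x ∈ X) : ¬Misses X e (level e x.2) :=
  fun h => h x hx rfl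

lemma misses_union {X X' : Set (Fin 2 × ZMod p)} {e : ZMod p} {t : ℕ} :
    Misses (X ∪ X') e t ↔ Misses X e t ∧ Misses X' e t :=
  ⟨fun h => ⟨fun v hv => h v (.inl hv), fun v hv => h v (.inr hv)⟩,
    fun h v => Or.rec (h.1 v) (h.2 v)⟩

variable [NeZero p]

lemma level_lt (e z : ZMod p) : level e z < p := ZMod.val_lt _

lemma level_injective {e z w : ZMod p} (h : level e z = level e w) : z = w :=
  sub_left_inj.mp (ZMod.val_injective p h)

lemma level_add_one (e z : ZMod p) :
    level e (z + 1) = level e z + 1 ∨ (level e (z + 1) = 0 ∧ level e z = p - 1) := by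
  have hlt := level_lt e z
  have h : level e (z + 1) = (level e z + 1) % p := by
    rw [level, level, ← ZMod.val_natCast, Nat.cast_add, ZMod.natCast_zmod_val, Nat.cast_one,
      sub_add_eq_add_sub]
  rcases (show level e z + 1 < p ∨ level e z + 1 = p by omega) with h' | h'
  · exact .inl (h.trans (Nat.mod_eq_of_lt h'))
  · exact .inr ⟨by rw [h, h', Nat.mod_self], by omega⟩

lemma level_of_adj (e : ZMod p) {u v : Fin 2 × ZMod p} (h : (Bagel p).Adj u v) :
    level e u.2 = level e v.2 ∨ level e u.2 = level e v.2 + 1 ∨ level e v.2 = level e u.2 + 1 ∨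
      (level e u.2 = 0 ∧ level e v.2 = p - 1) ∨ (level e v.2 = 0 ∧ level e u.2 = p - 1) := by
  obtain ⟨-, h⟩ := (SimpleGraph.fromRel_adj _ _ _).mp h
  rcases h with (h | h | h) | (h | h | h)
  · exact .inl (congrArg _ h)
  · rcases level_add_one e v.2 with h' | h' <;> rw [h] <;> omega
  · rcases level_add_one e u.2 with h' | h' <;> rw [h] <;> omega
  · exact .inl (congrArg _ h.symm)
  · rcases level_add_one e u.2 with h' | h' <;> rw [h] <;> omega
  · rcases level_add_one e v.2 with h' | h' <;> rw [h] <;> omega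

lemma eq_or_eq_of_level_eq {e : ZMod p} {x y v : Fin 2 × ZMod p} (hxy : x ≠ y)
    (hx : level e x.2 = level e v.2) (hy : level e y.2 = level e v.2) : v = x ∨ v = y := by
  have hx' := level_injective hx
  have hy' := level_injective hy
  have : x.1 ≠ y.1 := fun h => hxy (Prod.ext h (hx'.trans hy'.symm))
  rcases (show v.1 = x.1 ∨ v.1 = y.1 by omega) with h | h
  · exact .inl (Prod.ext h hx'.symm)
  · exact .inr (Prod.ext h hy'.symm)

lemma mem_or_mem_of_not_misses {X X' : Set (Fin 2 × ZMod p)} (hd : Disjoint X X') {e : ZMod p}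
    {v : Fin 2 × ZMod p} (hX : ¬Misses X e (level e v.2)) (hX' : ¬Misses X' e (level e v.2)) :
    v ∈ X ∨ v ∈ X' := by
  simp only [Misses, not_forall, not_not] at hX hX'
  obtain ⟨x, hx, hxv⟩ := hX
  obtain ⟨x', hx', hx'v⟩ := hX'
  rcases eq_or_eq_of_level_eq (fun (h : x = x') => Set.disjoint_left.mp hd hx (h ▸ hx')) hxv hx'v
    with rfl | rfl
  exacts [.inl hx, .inr hx']

open Classical in
noncomputable def freeAt (X : Set (Fin 2 × ZMod p)) (e : ZMod p) (t : ℕ) :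
    Finset (Fin 2 × ZMod p) :=
  univ.filter fun v => level e v.2 = t ∧ v ∉ X

lemma mem_freeAt {X : Set (Fin 2 × ZMod p)} {e : ZMod p} {t : ℕ} {v : Fin 2 × ZMod p} :
    v ∈ freeAt X e t ↔ level e v.2 = t ∧ v ∉ X := by
  simp [freeAt]

lemma card_freeAt_le_two (X : Set (Fin 2 × ZMod p)) (e : ZMod p) (t : ℕ) :
    #(freeAt X e t) ≤ 2 := by
  have hinj : Set.InjOn Prod.fst (freeAt X e t : Set (Fin 2 × ZMod p)) := by
    intro v hv w hw h
    rw [mem_coe, mem_freeAt] at hv hw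
    exact Prod.ext h (level_injective (hv.1.trans hw.1.symm))
  simpa using card_le_card_of_injOn Prod.fst (fun _ _ => mem_coe.mpr (mem_univ _)) hinj

lemma card_freeAt_le_one {X : Set (Fin 2 × ZMod p)} {e : ZMod p} {t : ℕ} (h : ¬Misses X e t) :
    #(freeAt X e t) ≤ 1 := by
  simp only [Misses, not_forall, not_not] at h
  obtain ⟨x, hx, rfl⟩ := h
  refine card_le_one.mpr fun v hv w hw => by_contra fun hvw => ?_
  rw [mem_freeAt] at hv hw
  rcases eq_or_eq_of_level_eq hvw hv.1 hw.1 with rfl | rfl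
  exacts [hv.2 hx, hw.2 hx]

section

variable {X X' Y : Set (Fin 2 × ZMod p)} {e : ZMod p}

lemma misses_or_misses_of_isLink (hY : IsLink (Bagel p) X X' Y) (hd : Disjoint X X')
    {v : Fin 2 × ZMod p} (hv : v ∈ Y) : Misses X e (level e v.2) ∨ Misses X' e (level e v.2) := by
  rw [or_iff_not_and_not]
  rintro ⟨h, h'⟩
  rcases mem_or_mem_of_not_misses hd h h' with h' | h'
  exacts [Set.disjoint_left.mp hY.2.1 h' hv, Set.disjoint_left.mp hY.2.2.1 h' hv]

lemma misses_of_isLink {S : Finset (Fin 2 × ZMod p)} {t : ℕ} (hY : IsLink (Bagel p) X X' Y)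
    (hS : ∀ v ∈ Y, v ∉ S) (ht : freeAt (X ∪ X') e t ⊆ S) : Misses Y e t := by
  refine fun v hv hvt => hS v hv (ht (mem_freeAt.mpr ⟨hvt, ?_⟩))
  rintro (h | h)
  exacts [Set.disjoint_left.mp hY.2.1 h hv, Set.disjoint_left.mp hY.2.2.1 h hv]

lemma level_mem_Ioo_iff_of_connected (hY : SetConnected (Bagel p) Y) {t₁ t₂ : ℕ} (ht₂ : t₂ < p)
    (h₁ : Misses Y e t₁) (h₂ : Misses Y e t₂) {u w : Fin 2 × ZMod p} (hu : u ∈ Y) (hw : w ∈ Y) :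
    level e u.2 ∈ Set.Ioo t₁ t₂ ↔ level e w.2 ∈ Set.Ioo t₁ t₂ := by
  refine hY.iff_of_adj (P := fun v => level e v.2 ∈ Set.Ioo t₁ t₂) (fun a ha b hb hab => ?_) hu hw
  have := level_of_adj e hab
  have := h₁ a ha; have := h₁ b hb; have := h₂ a ha; have := h₂ b hb
  simp only [Set.mem_Ioo]
  omega

lemma exists_gap (hX : SetConnected (Bagel p) X) {x₀ : Fin 2 × ZMod p} (hx₀ : x₀ ∈ X)
    (he : x₀.2 = e) : ∃ g₁ g₂, 1 ≤ g₁ ∧ g₂ < p ∧ ∀ t < p, Misses X e t ↔ g₁ ≤ t ∧ t ≤ g₂ := by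
  classical
  subst he
  by_cases hmiss : ∃ t, t < p ∧ Misses X x₀.2 t
  swap
  -- no missed level: the empty interval `[1, 0]`
  · exact ⟨1, 0, le_rfl, NeZero.pos p,
      fun t ht => iff_of_false (fun h => hmiss ⟨t, ht, h⟩) (by omega)⟩
  obtain ⟨t₀, ht₀, hXt₀⟩ := id hmiss
  obtain ⟨-, hg₁⟩ := Nat.find_spec hmiss
  have hg₂ := Nat.findGreatest_spec (P := Misses X x₀.2) (show t₀ ≤ p - 1 by omega) hXt₀
  have hx₀' : ¬Misses X x₀.2 0 := level_self x₀.2 ▸ not_misses_of_mem hx₀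
  refine ⟨Nat.find hmiss, Nat.findGreatest (Misses X x₀.2) (p - 1),
    Nat.pos_of_ne_zero fun h => hx₀' (h ▸ hg₁),
    by have := Nat.findGreatest_le (P := Misses X x₀.2) (p - 1); omega,
    fun t ht => ⟨fun h => ⟨Nat.find_min' hmiss ⟨ht, h⟩, Nat.le_findGreatest (by omega) h⟩,
      fun ⟨h₁, h₂⟩ v hv hvt => ?_⟩⟩
  have hv₁ := hg₁ v hv
  have hv₂ := hg₂ v hv
  have := (level_mem_Ioo_iff_of_connected hX (Nat.lt_of_le_of_lt (Nat.findGreatest_le _)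
    (by omega)) hg₁ hg₂ hv hx₀).mp ⟨by omega, by omega⟩
  rw [level_self] at this
  exact absurd this.1 (Nat.not_lt_zero _)

lemma card_freeAt_union_le_two {s t : ℕ} (h : s = t ∨ ¬Misses X e s ∧ ¬Misses X e t) :
    #(freeAt X e s ∪ freeAt X e t) ≤ 2 := by
  rcases h with rfl | ⟨hs, ht⟩
  · rw [union_self]
    exact card_freeAt_le_two X e s
  · exact (card_union_le _ _).trans (add_le_add (card_freeAt_le_one hs) (card_freeAt_le_one ht))

lemma exists_separates_of_gap (hd : Disjoint X X') {g₁ g₂ : ℕ} (hg₂ : g₂ < p)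
    (hX : ∀ t < p, Misses X e t ↔ g₁ ≤ t ∧ t ≤ g₂)
    (hX' : ∀ t < p, Misses X' e t → g₁ ≤ t ∧ t ≤ g₂) :
    ∃ S : Finset (Fin 2 × ZMod p), #S ≤ 4 ∧ Separates (Bagel p) S X X' := by
  refine ⟨freeAt (X ∪ X') e g₁ ∪ freeAt (X ∪ X') e g₂, (card_union_le _ _).trans
    (add_le_add (card_freeAt_le_two _ _ _) (card_freeAt_le_two _ _ _)), fun Y hY => ?_⟩
  by_contra hS
  simp only [not_exists, not_and] at hS
  have hY₁ := misses_of_isLink hY hS subset_union_left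
  have hY₂ := misses_of_isLink hY hS subset_union_right
  obtain ⟨x, hx, u, hu, hxu⟩ := hY.2.2.2.1
  have := level_of_adj e hxu
  have := mt (hX _ (level_lt _ _)).mpr (not_misses_of_mem hx)
  have := (misses_or_misses_of_isLink hY hd hu).imp (hX _ (level_lt _ _)).mp (hX' _ (level_lt _ _))
  have := hY₁ u hu; have := hY₂ u hu; have := level_lt e u.2; have := level_lt e x.2
  omega

lemma exists_separates_of_crossing_gaps (hd : Disjoint X X') {a₁ a₂ b₁ b₂ : ℕ} (ha₁ : 1 ≤ a₁)
    (hb : b₁ ≤ b₂) (h₁ : a₁ < b₁) (h₂ : a₂ < b₂) (hb₂ : b₂ < p)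
    (hX : ∀ t < p, Misses X e t ↔ a₁ ≤ t ∧ t ≤ a₂)
    (hX' : ∀ t < p, Misses X' e t ↔ b₁ ≤ t ∧ t ≤ b₂) :
    ∃ S : Finset (Fin 2 × ZMod p), #S ≤ 4 ∧ Separates (Bagel p) S X X' := by
  have hXt : ∀ t < p, ¬(a₁ ≤ t ∧ t ≤ a₂) → ¬Misses (X ∪ X') e t :=
    fun t ht hA h => hA ((hX t ht).mp (misses_union.mp h).1)
  have hX't : ∀ t < p, ¬(b₁ ≤ t ∧ t ≤ b₂) → ¬Misses (X ∪ X') e t :=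
    fun t ht hB h => hB ((hX' t ht).mp (misses_union.mp h).2)
  set W := X ∪ X'
  -- The middle cut is the empty column `b₁` if the gaps overlap, and otherwise the two
  -- half-occupied columns `a₂` and `b₁`.
  refine ⟨freeAt W e a₁ ∪ (freeAt W e (min a₂ b₁) ∪ freeAt W e b₁) ∪ freeAt W e b₂, ?_,
    fun Y hY => ?_⟩
  · have := card_freeAt_le_one (hX't a₁ (by omega) (by omega))
    have := card_freeAt_le_one (hXt b₂ hb₂ (by omega))
    have := card_freeAt_union_le_two (X := W) (e := e) (s := min a₂ b₁) (t := b₁) <| by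
      rcases le_or_gt b₁ a₂ with h | h
      · exact .inl (min_eq_right h)
      · rw [min_eq_left h.le]
        exact .inr ⟨hX't a₂ (by omega) (by omega), hXt b₁ (by omega) (by omega)⟩
    have := card_union_le (freeAt W e a₁ ∪ (freeAt W e (min a₂ b₁) ∪ freeAt W e b₁))
      (freeAt W e b₂)
    have := card_union_le (freeAt W e a₁) (freeAt W e (min a₂ b₁) ∪ freeAt W e b₁)
    omega
  by_contra hS
  simp only [not_exists, not_and] at hS
  have hYa₁ := misses_of_isLink hY hS (e := e) (t := a₁) fun v hv => by simp [W, hv]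
  have hYm := misses_of_isLink hY hS (e := e) (t := min a₂ b₁) fun v hv => by simp [W, hv]
  have hYb₁ := misses_of_isLink hY hS (e := e) (t := b₁) fun v hv => by simp [W, hv]
  have hYb₂ := misses_of_isLink hY hS (e := e) (t := b₂) fun v hv => by simp [W, hv]
  have hYgap : ∀ v ∈ Y, (a₁ ≤ level e v.2 ∧ level e v.2 ≤ a₂) ∨
      (b₁ ≤ level e v.2 ∧ level e v.2 ≤ b₂) := fun v hv =>
    (misses_or_misses_of_isLink hY hd hv).imp (hX _ (level_lt _ _)).mp (hX' _ (level_lt _ _)).mp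
  have hY₀ : Misses Y e 0 := fun v hv h => by have := hYgap v hv; omega
  obtain ⟨x, hx, u, hu, hxu⟩ := hY.2.2.2.1
  obtain ⟨y, hy, w, hw, hyw⟩ := hY.2.2.2.2
  have := level_of_adj e hxu
  have := level_of_adj e hyw
  have := mt (hX _ (level_lt _ _)).mpr (not_misses_of_mem hx)
  have := mt (hX' _ (level_lt _ _)).mpr (not_misses_of_mem hy)
  have := hYgap u hu; have := hYgap w hw
  have := hYa₁ u hu; have := hYm u hu; have := hYb₁ u hu; have := hYb₂ u hu
  have := hYa₁ w hw; have := hYm w hw; have := hYb₁ w hw; have := hYb₂ w hw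
  have := level_lt e x.2; have := level_lt e y.2
  have hw' : level e w.2 ∈ Set.Ioo 0 b₁ := ⟨by omega, by omega⟩
  have hu' := (level_mem_Ioo_iff_of_connected hY.1 (by omega) hY₀ hYb₁ hu hw).mpr hw'
  simp only [Set.mem_Ioo] at hu'
  omega

lemma exists_separates_of_disjoint_columns (hX : X.Nonempty) (hX' : SetConnected (Bagel p) X')
    (h : ∀ x ∈ X, ∀ y ∈ X', x.2 ≠ y.2) :
    ∃ S : Finset (Fin 2 × ZMod p), #S ≤ 4 ∧ Separates (Bagel p) S X X' := by
  obtain ⟨y₀, hy₀⟩ := hX'.nonempty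
  obtain ⟨e, he⟩ : ∃ e, y₀.2 = e := ⟨_, rfl⟩
  obtain ⟨g₁, g₂, hg₁, hg₂, hgap⟩ := exists_gap hX' hy₀ he
  have hXgap : ∀ x ∈ X, g₁ ≤ level e x.2 ∧ level e x.2 ≤ g₂ := fun x hx =>
    (hgap _ (level_lt _ _)).mp fun y hy hyx => h x hx y hy (level_injective hyx).symm
  have hX't : ∀ t < p, ¬(g₁ ≤ t ∧ t ≤ g₂) → ¬Misses (X ∪ X') e t :=
    fun t ht hout h' => hout ((hgap t ht).mp (misses_union.mp h').2)
  obtain ⟨xm, hxm, hmin⟩ : ∃ xm ∈ X, ∀ x ∈ X, level e xm.2 ≤ level e x.2 :=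
    Set.exists_min_image X (fun v => level e v.2) X.toFinite hX
  obtain ⟨xM, hxM, hmax⟩ : ∃ xM ∈ X, ∀ x ∈ X, level e x.2 ≤ level e xM.2 :=
    Set.exists_max_image X (fun v => level e v.2) X.toFinite hX
  have := hXgap xm hxm
  have := hXgap xM hxM
  have := level_lt e xM.2
  obtain ⟨m, hm⟩ : ∃ m, level e xm.2 = m := ⟨_, rfl⟩
  obtain ⟨M, hM⟩ : ∃ M, level e xM.2 = M := ⟨_, rfl⟩
  have hWm : ¬Misses (X ∪ X') e m := hm ▸ not_misses_of_mem (.inl hxm)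
  have hWM : ¬Misses (X ∪ X') e M := hM ▸ not_misses_of_mem (.inl hxM)
  -- A link touching `X` lies strictly between the cut levels `L` and `R`, since it cannot use
  -- the columns `m - 1` and `N` flanking `X`; a link touching `X'` does not.
  obtain ⟨L, hL⟩ : ∃ L, g₁ < m ∧ L = m - 1 ∨ g₁ = m ∧ L = m :=
    ⟨if g₁ < m then m - 1 else m, by split_ifs <;> omega⟩
  obtain ⟨R, hR⟩ : ∃ R, M < g₂ ∧ R = M + 1 ∨ M = g₂ ∧ R = M :=
    ⟨if M < g₂ then M + 1 else M, by split_ifs <;> omega⟩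
  obtain ⟨N, hN⟩ : ∃ N, M + 1 < p ∧ N = M + 1 ∨ M + 1 = p ∧ N = 0 :=
    ⟨if M + 1 < p then M + 1 else 0, by split_ifs <;> omega⟩
  set W := X ∪ X'
  refine ⟨(freeAt W e (m - 1) ∪ freeAt W e L) ∪ (freeAt W e R ∪ freeAt W e N), ?_,
    fun Y hY => ?_⟩
  · have := card_freeAt_union_le_two (X := W) (e := e) (s := m - 1) (t := L) <| by
      rcases hL with ⟨hL, rfl⟩ | ⟨hL, rfl⟩
      · exact .inl rfl
      · exact .inr ⟨hX't _ (by omega) (by omega), hWm⟩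
    have := card_freeAt_union_le_two (X := W) (e := e) (s := R) (t := N) <| by
      rcases hR with ⟨hR, rfl⟩ | ⟨hR, rfl⟩
      · exact .inl (by omega)
      · exact .inr ⟨hWM, hX't _ (by omega) (by omega)⟩
    have := card_union_le (freeAt W e (m - 1) ∪ freeAt W e L) (freeAt W e R ∪ freeAt W e N)
    omega
  by_contra hS
  simp only [not_exists, not_and] at hS
  have hYm := misses_of_isLink hY hS (e := e) (t := m - 1) fun v hv => by simp [W, hv]
  have hYL := misses_of_isLink hY hS (e := e) (t := L) fun v hv => by simp [W, hv]
  have hYR := misses_of_isLink hY hS (e := e) (t := R) fun v hv => by simp [W, hv]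
  have hYN := misses_of_isLink hY hS (e := e) (t := N) fun v hv => by simp [W, hv]
  obtain ⟨x, hx, u, hu, hxu⟩ := hY.2.2.2.1
  obtain ⟨y, hy, w, hw, hyw⟩ := hY.2.2.2.2
  have := level_of_adj e hxu
  have := level_of_adj e hyw
  have := hmin x hx
  have := hmax x hx
  have := mt (hgap _ (level_lt _ _)).mpr (not_misses_of_mem hy)
  have := hYm u hu; have := hYL u hu; have := hYR u hu; have := hYN u hu
  have := hYL w hw; have := hYR w hw
  have := level_lt e u.2; have := level_lt e y.2; have := level_lt e w.2
  have hu' : level e u.2 ∈ Set.Ioo L R := ⟨by omega, by omega⟩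
  have hw' := (level_mem_Ioo_iff_of_connected hY.1 (by omega) hYL hYR hu hw).mp hu'
  simp only [Set.mem_Ioo] at hw'
  omega

lemma exists_separates_of_common_column (hd : Disjoint X X') (hX : SetConnected (Bagel p) X)
    (hX' : SetConnected (Bagel p) X') {x y : Fin 2 × ZMod p} (hx : x ∈ X) (hy : y ∈ X')
    (hxy : x.2 = y.2) : ∃ S : Finset (Fin 2 × ZMod p), #S ≤ 4 ∧ Separates (Bagel p) S X X' := by
  obtain ⟨a₁, a₂, ha₁, ha₂, hA⟩ := exists_gap hX hx rfl
  obtain ⟨b₁, b₂, hb₁, hb₂, hB⟩ := exists_gap hX' hy hxy.symm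
  by_cases hBA : b₂ < b₁ ∨ a₁ ≤ b₁ ∧ b₂ ≤ a₂
  · exact exists_separates_of_gap hd ha₂ hA fun t ht h => by have := (hB t ht).mp h; omega
  by_cases hAB : a₂ < a₁ ∨ b₁ ≤ a₁ ∧ a₂ ≤ b₂
  · obtain ⟨S, hS, hsep⟩ := exists_separates_of_gap hd.symm hb₂ hB
      fun t ht h => by have := (hA t ht).mp h; omega
    exact ⟨S, hS, hsep.symm⟩
  rcases (by omega : a₁ < b₁ ∧ a₂ < b₂ ∨ b₁ < a₁ ∧ b₂ < a₂) with ⟨h₁, h₂⟩ | ⟨h₁, h₂⟩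
  · exact exists_separates_of_crossing_gaps hd ha₁ (by omega) h₁ h₂ hb₂ hA hB
  · obtain ⟨S, hS, hsep⟩ := exists_separates_of_crossing_gaps hd.symm hb₁ (by omega) h₁ h₂ ha₂ hB hA
    exact ⟨S, hS, hsep.symm⟩

lemma exists_separates (hd : Disjoint X X') (hX : SetConnected (Bagel p) X)
    (hX' : SetConnected (Bagel p) X') :
    ∃ S : Finset (Fin 2 × ZMod p), #S ≤ 4 ∧ Separates (Bagel p) S X X' := by
  by_cases h : ∃ x ∈ X, ∃ y ∈ X', x.2 = y.2
  · obtain ⟨x, hx, y, hy, hxy⟩ := h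
    exact exists_separates_of_common_column hd hX hX' hx hy hxy
  · simp only [not_exists, not_and] at h
    exact exists_separates_of_disjoint_columns hX.nonempty hX' h

end

theorem card_le_four_of_isK2Model {X₁ X₂ : Set (Fin 2 × ZMod p)} {ι : Type} [Fintype ι]
    {Y : ι → Set (Fin 2 × ZMod p)} (h : IsK2Model (Bagel p) X₁ X₂ Y) : Fintype.card ι ≤ 4 :=
  let ⟨hd, _, _, hX₁, hX₂, _⟩ := h
  let ⟨_, hS, hsep⟩ := exists_separates hd hX₁ hX₂
  (h.card_le_card_of_separates hsep).trans hS

end Bagel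

theorem bagel_no_K25_minor_general (n : ℕ) (hn : 6 ≤ n) :
    ¬ ∃ (X1 X2 : Set (Fin 2 × ZMod (n / 2))) (Y : Fin 5 → Set (Fin 2 × ZMod (n / 2))),
      IsK2Model (Bagel (n / 2)) X1 X2 Y := by
  have : NeZero (n / 2) := ⟨by omega⟩
  rintro ⟨X1, X2, Y, h⟩
  simpa using Bagel.card_le_four_of_isK2Model h

/-- for every even `n ≥ 6`, the bagel graph `B_n = K₂ ⊠ C_{n/2}`
contains no `K_{2,5}` minor. -/
theorem bagel_no_K25_minor (n : ℕ) (hn : 6 ≤ n) (heven : Even n) :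
    ¬ ∃ (X1 X2 : Set (Fin 2 × ZMod (n / 2))) (Y : Fin 5 → Set (Fin 2 × ZMod (n / 2))),
      IsK2Model (Bagel (n / 2)) X1 X2 Y :=
  bagel_no_K25_minor_general n hn
end

section
/- Let T be a finite tree rooted at r, with g non-root leaves ℓ_1, ..., ℓ_g, such that any two distinct vertices in {r, ℓ_1, ..., ℓ_g} are at distance at least d in T. For each i, let A_i be the set of vertices at distance at most d/3 from ℓ_i (so the A_i are pairwise disjoint and none contains r). Let B_1, ..., B_k be the vertex sets of the connected components of T − (A_1 ∪ ... ∪ A_g). Then k ≤ g. -/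
set_option linter.unusedSectionVars false

open SimpleGraph Walk

section Aux
variable {V : Type} [DecidableEq V] {T : SimpleGraph V}

/-- The canonical path between two vertices of a tree. -/
noncomputable def tp (hT : T.IsTree) (a b : V) : T.Walk a b :=
  (hT.existsUnique_path a b).choose

lemma tp_isPath (hT : T.IsTree) (a b : V) : (tp hT a b).IsPath :=
  (hT.existsUnique_path a b).choose_spec.1

lemma tp_unique (hT : T.IsTree) {a b : V} (p : T.Walk a b) (hp : p.IsPath) :
    p = tp hT a b :=
  (hT.existsUnique_path a b).choose_spec.2 p hp

lemma tp_length (hT : T.IsTree) (a b : V) : (tp hT a b).length = T.dist a b := by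
  obtain ⟨p, hp, hl⟩ := hT.isConnected.exists_path_of_dist a b
  rw [← tp_unique hT p hp]; exact hl

lemma tp_support_subset_walk (hT : T.IsTree) {a b x : V}
    (hx : x ∈ (tp hT a b).support) (W : T.Walk a b) : x ∈ W.support := by
  have h := tp_unique hT W.bypass W.bypass_isPath
  exact W.support_bypass_subset (by rw [h]; exact hx)

lemma btw_of_mem (hT : T.IsTree) {a b x : V} (hx : x ∈ (tp hT a b).support) :
    T.dist a x + T.dist x b = T.dist a b := by
  have h1 : (tp hT a b).takeUntil x hx = tp hT a x :=
    tp_unique hT _ ((tp_isPath hT a b).takeUntil hx)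
  have h2 : (tp hT a b).dropUntil x hx = tp hT x b :=
    tp_unique hT _ ((tp_isPath hT a b).dropUntil hx)
  have h3 := congrArg Walk.length ((tp hT a b).take_spec hx)
  rw [Walk.length_append, h1, h2, tp_length, tp_length, tp_length] at h3
  exact h3

lemma mem_of_btw (hT : T.IsTree) {a b x : V}
    (h : T.dist a x + T.dist x b = T.dist a b) : x ∈ (tp hT a b).support := by
  have hlen : ((tp hT a x).append (tp hT x b)).length = T.dist a b := by
    rw [Walk.length_append, tp_length, tp_length, h]
  have hpath : ((tp hT a x).append (tp hT x b)).IsPath :=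
    Walk.isPath_of_length_eq_dist _ hlen
  rw [← tp_unique hT _ hpath]
  exact (Walk.mem_support_append_iff _ _).mpr (Or.inl (Walk.end_mem_support _))

lemma btw_trans_left (hT : T.IsTree) {a b e e' : V}
    (h1 : T.dist a e + T.dist e b = T.dist a b)
    (h2 : T.dist a e' + T.dist e' b = T.dist a b)
    (hle : T.dist a e ≤ T.dist a e') :
    T.dist a e + T.dist e e' = T.dist a e' := by
  have he' := mem_of_btw hT h2
  have he := mem_of_btw hT h1
  have hsplit := (tp hT a b).take_spec he'
  have hcases : e ∈ ((tp hT a b).takeUntil e' he').support ∨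
      e ∈ ((tp hT a b).dropUntil e' he').support :=
    (Walk.mem_support_append_iff _ _).mp (by rw [hsplit]; exact he)
  rcases hcases with hc | hc
  · have h4 : (tp hT a b).takeUntil e' he' = tp hT a e' :=
      tp_unique hT _ ((tp_isPath hT a b).takeUntil he')
    rw [h4] at hc
    exact btw_of_mem hT hc
  · have h4 : (tp hT a b).dropUntil e' he' = tp hT e' b :=
      tp_unique hT _ ((tp_isPath hT a b).dropUntil he')
    rw [h4] at hc
    have h5 := btw_of_mem hT hc
    have hee : e' = e := hT.isConnected.dist_eq_zero_iff.mp (by omega)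
    subst hee
    have := SimpleGraph.dist_self (G := T) (v := e')
    omega

lemma reachable_induce_of_walk {S : Set V} :
    ∀ {a b : V} (W : T.Walk a b), (∀ x ∈ W.support, x ∈ S) → ∀ (ha : a ∈ S) (hb : b ∈ S),
    (T.induce S).Reachable ⟨a, ha⟩ ⟨b, hb⟩ := by
  intro a b W
  induction W with
  | nil => intro _ ha hb; rfl
  | @cons a c b h p ih =>
      intro hW ha hb
      have hc : c ∈ S := hW c (by simp)
      have hadj : (T.induce S).Adj ⟨a, ha⟩ ⟨c, hc⟩ := h
      exact hadj.reachable.trans (ih (fun x hx => hW x (by simp [hx])) hc hb)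

end Aux

/-- let `T` be a finite tree rooted at `r` whose non-root leaves
are exactly `ℓ 0, …, ℓ (g-1)` (with `g ≥ 1`), pairwise at distance at least `d`
from each other and from `r`. Let `A i` be the ball of radius `d/3` around
`ℓ i`, and let `B_1, …, B_k` be the connected components of
`T − (A 0 ∪ ⋯ ∪ A (g-1))`. Then `k ≤ g`. -/
theorem tree_component_count {V : Type} [Fintype V] (T : SimpleGraph V)
    (hT : T.IsTree) (r : V) (g d : ℕ) (hg : 1 ≤ g) (ℓ : Fin g → V)
    (hinj : Function.Injective ℓ)
    (hleaves : ∀ x : V, ((T.neighborSet x).ncard = 1 ∧ x ≠ r) ↔ x ∈ Set.range ℓ)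
    (hdist : ∀ i j, i ≠ j → d ≤ T.dist (ℓ i) (ℓ j))
    (hdistr : ∀ i, d ≤ T.dist r (ℓ i)) :
    Nat.card (SimpleGraph.ConnectedComponent
      (T.induce (⋃ i, {v | T.dist v (ℓ i) ≤ d / 3})ᶜ)) ≤ g := by
  classical
  set S : Set V := (⋃ i, {v | T.dist v (ℓ i) ≤ d / 3})ᶜ with hS
  have hc := hT.isConnected
  have hSmem : ∀ x : V, x ∈ S ↔ ∀ j : Fin g, ¬ (T.dist x (ℓ j) ≤ d / 3) := by
    intro x; rw [hS]; simp
  have hlr : ∀ j : Fin g, ℓ j ≠ r := fun j => ((hleaves (ℓ j)).2 ⟨j, rfl⟩).2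
  have hrS : r ∈ S := by
    rw [hSmem]; intro j hle
    rcases Nat.eq_zero_or_pos d with hd | hd
    · rw [hd] at hle
      simp only [Nat.zero_div, Nat.le_zero] at hle
      exact hlr j ((hc.dist_eq_zero_iff.mp hle).symm)
    · have h3 : d / 3 < d := Nat.div_lt_self hd (by norm_num)
      have := hdistr j
      have hcm : T.dist r (ℓ j) = T.dist (ℓ j) r := SimpleGraph.dist_comm
      have hcm2 : T.dist (ℓ j) r = T.dist r (ℓ j) := SimpleGraph.dist_comm
      omega
  -- every vertex lies on the canonical path from some leaf to the root
  have hdesc : ∀ v : V, ∃ j : Fin g, T.dist (ℓ j) v + T.dist v r = T.dist (ℓ j) r := by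
    have main : ∀ n (v : V), Fintype.card V ≤ n + T.dist r v →
        ∃ j : Fin g, T.dist (ℓ j) v + T.dist v r = T.dist (ℓ j) r := by
      intro n
      induction n with
      | zero =>
        intro v hv
        exfalso
        have h1 := (tp_isPath hT r v).length_lt
        rw [tp_length] at h1; omega
      | succ n ih =>
        intro v hv
        by_cases hvr : v = r
        · subst hvr
          exact ⟨⟨0, hg⟩, by simp [SimpleGraph.dist_self]⟩
        by_cases hvl : v ∈ Set.range ℓ
        · obtain ⟨j, rfl⟩ := hvl
          exact ⟨j, by simp [SimpleGraph.dist_self]⟩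
        obtain ⟨u, hadj, q, hpq⟩ := Walk.exists_eq_cons_of_ne hvr (tp hT v r)
        have hncard : (T.neighborSet v).ncard ≠ 1 := fun h => hvl ((hleaves v).1 ⟨h, hvr⟩)
        have hexw : ∃ w, T.Adj v w ∧ w ≠ u := by
          by_contra hcon
          push_neg at hcon
          apply hncard
          have hns : T.neighborSet v = {u} := by
            ext w
            simp only [SimpleGraph.mem_neighborSet, Set.mem_singleton_iff]
            constructor
            · exact fun hw => hcon w hw
            · rintro rfl; exact hadj
          rw [hns]; exact Set.ncard_singleton u
        obtain ⟨w, hwadj, hwu⟩ := hexw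
        have hbwvr : T.dist w v + T.dist v r = T.dist w r := by
          by_cases hvw : v ∈ (tp hT w r).support
          · exact btw_of_mem hT hvw
          · exfalso
            have hWpath : (Walk.cons hwadj (tp hT w r)).IsPath :=
              (Walk.cons_isPath_iff _ _).mpr ⟨tp_isPath hT w r, hvw⟩
            have hEq := (tp_unique hT _ hWpath).trans hpq
            have hs := congrArg Walk.support hEq
            rw [Walk.support_cons, Walk.support_cons] at hs
            injection hs with _ hs2
            rw [Walk.support_eq_cons (tp hT w r), Walk.support_eq_cons q] at hs2
            injection hs2 with h5 _
            exact hwu h5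
        have hdwv : T.dist w v = 1 := SimpleGraph.dist_eq_one_iff_adj.mpr hwadj.symm
        have hcm : T.dist r w = T.dist w r := SimpleGraph.dist_comm
        have hcm2 : T.dist r v = T.dist v r := SimpleGraph.dist_comm
        obtain ⟨j, hj⟩ := ih w (by omega)
        refine ⟨j, ?_⟩
        have t1 := hc.dist_triangle (u := ℓ j) (v := w) (w := v)
        have t2 := hc.dist_triangle (u := ℓ j) (v := v) (w := r)
        omega
    intro v; exact main (Fintype.card V) v (by omega)
  -- minimizers
  have hmin : ∀ (a b : V), b ∈ S → ∃ e, e ∈ S ∧ (T.dist a e + T.dist e b = T.dist a b) ∧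
      (∀ x, x ∈ S → T.dist a x + T.dist x b = T.dist a b → T.dist a e ≤ T.dist a x) := by
    intro a b hb
    have hne : (Finset.univ.filter
        (fun x : V => x ∈ S ∧ T.dist a x + T.dist x b = T.dist a b)).Nonempty :=
      ⟨b, by simp [hb, SimpleGraph.dist_self]⟩
    obtain ⟨e, he, hemin⟩ := Finset.exists_min_image _ (fun x => T.dist a x) hne
    simp only [Finset.mem_filter, Finset.mem_univ, true_and] at he hemin
    exact ⟨e, he.1, he.2, fun x hx hbx => hemin x ⟨hx, hbx⟩⟩
  choose e he_S he_btw he_min using fun i : Fin g => hmin (ℓ i) r hrS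
  have hsurj : Function.Surjective
      (fun i : Fin g => (T.induce S).connectedComponentMk ⟨e i, he_S i⟩) := by
    intro B
    obtain ⟨vv, rfl⟩ := B.exists_rep
    have hvS : (vv : V) ∈ S := vv.2
    obtain ⟨j₀, hj₀⟩ := hdesc (vv : V)
    have hDne : (Finset.univ.filter
        (fun j : Fin g => T.dist (ℓ j) (vv : V) + T.dist (vv : V) r = T.dist (ℓ j) r)).Nonempty :=
      ⟨j₀, by simp [hj₀]⟩
    obtain ⟨i, hiD, himin⟩ := Finset.exists_min_image _ (fun j => T.dist (vv : V) (ℓ j)) hDne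
    simp only [Finset.mem_filter, Finset.mem_univ, true_and] at hiD himin
    -- key claim
    have hC1 : ∀ x : V, T.dist (ℓ i) x + T.dist x (vv : V) = T.dist (ℓ i) (vv : V) →
        x ∉ S → T.dist x (ℓ i) ≤ d / 3 := by
      intro x hbx hxS
      have hxU : ∃ j : Fin g, T.dist x (ℓ j) ≤ d / 3 := by
        by_contra hcon
        push_neg at hcon
        exact hxS ((hSmem x).mpr (fun j h => absurd h (by have := hcon j; omega)))
      obtain ⟨j, hj⟩ := hxU
      by_cases hvj : (vv : V) ∈ (tp hT x (ℓ j)).support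
      · exfalso
        have h5 := btw_of_mem hT hvj
        have h6 := (hSmem (vv : V)).mp hvS j
        omega
      · have hbvr : T.dist x (vv : V) + T.dist (vv : V) r = T.dist x r := by
          have t1 := hc.dist_triangle (u := x) (v := (vv : V)) (w := r)
          have t2 := hc.dist_triangle (u := ℓ i) (v := x) (w := r)
          omega
        have hvmem : (vv : V) ∈ (tp hT x r).support := mem_of_btw hT hbvr
        have hvW := tp_support_subset_walk hT hvmem ((tp hT x (ℓ j)).append (tp hT (ℓ j) r))
        rcases (Walk.mem_support_append_iff _ _).mp hvW with hca | hcb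
        · exact absurd hca hvj
        · have hjD := btw_of_mem hT hcb
          have h7 := himin j hjD
          have t3 := hc.dist_triangle (u := (vv : V)) (v := x) (w := ℓ j)
          have c1 : T.dist (vv : V) (ℓ i) = T.dist (ℓ i) (vv : V) := SimpleGraph.dist_comm
          have c2 : T.dist x (vv : V) = T.dist (vv : V) x := SimpleGraph.dist_comm
          have c3 : T.dist x (ℓ i) = T.dist (ℓ i) x := SimpleGraph.dist_comm
          omega
    -- entry point towards v
    obtain ⟨ev, hev_S, hev_btw, hev_min⟩ := hmin (ℓ i) (vv : V) hvS
    have hbr : T.dist (ℓ i) ev + T.dist ev r = T.dist (ℓ i) r := by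
      have t1 := hc.dist_triangle (u := ℓ i) (v := ev) (w := r)
      have t2 := hc.dist_triangle (u := ev) (v := (vv : V)) (w := r)
      omega
    have hle : T.dist (ℓ i) (e i) ≤ T.dist (ℓ i) ev := he_min i ev hev_S hbr
    have hbt := btw_trans_left hT (he_btw i) hbr hle
    have hbiv : T.dist (ℓ i) (e i) + T.dist (e i) (vv : V) = T.dist (ℓ i) (vv : V) := by
      have t1 := hc.dist_triangle (u := ℓ i) (v := e i) (w := (vv : V))
      have t2 := hc.dist_triangle (u := e i) (v := ev) (w := (vv : V))
      omega
    have hle2 := hev_min (e i) (he_S i) hbiv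
    have heq : e i = ev := hc.dist_eq_zero_iff.mp (by omega)
    have hsub : ∀ x ∈ (tp hT ev (vv : V)).support, x ∈ S := by
      intro x hx
      have hbev := btw_of_mem hT hx
      by_contra hxS
      have t1 := hc.dist_triangle (u := ℓ i) (v := ev) (w := x)
      have t2 := hc.dist_triangle (u := ℓ i) (v := x) (w := (vv : V))
      have hbx : T.dist (ℓ i) x + T.dist x (vv : V) = T.dist (ℓ i) (vv : V) := by omega
      have h8 := hC1 x hbx hxS
      have h9 := (hSmem ev).mp hev_S i
      have c1 : T.dist ev (ℓ i) = T.dist (ℓ i) ev := SimpleGraph.dist_comm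
      have c2 : T.dist x (ℓ i) = T.dist (ℓ i) x := SimpleGraph.dist_comm
      omega
    have hreach := reachable_induce_of_walk (tp hT ev (vv : V)) hsub hev_S hvS
    refine ⟨i, ?_⟩
    have hsub2 : (⟨e i, he_S i⟩ : S) = ⟨ev, hev_S⟩ := Subtype.ext heq
    show (T.induce S).connectedComponentMk ⟨e i, he_S i⟩ = _
    rw [hsub2]
    exact ConnectedComponent.sound hreach
  calc Nat.card (SimpleGraph.ConnectedComponent (T.induce S))
      ≤ Nat.card (Fin g) := Nat.card_le_card_of_surjective _ hsurj
    _ = g := by simp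
end
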